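/- Let b ∈ ℝ³ with b ≠ 0, let α > 0, and let μ ∈ ℝ³ with ‖μ‖ = 1. Then -μ×b - α μ×(μ×b) = 0 if and only if μ = b/‖b‖ or μ = -b/‖b‖. That is, the equilibrium points of the Landau–Lifshitz equation on the unit sphere are exactly ±b/‖b‖. -/

import Mathlib

/-!
Pairing the right-hand side with `μ × b` kills the damping term, which is orthogonal to `μ × b`,
and leaves `-‖μ × b‖²`; so for every `α` the equilibria are the zeros of `μ × b`. By Lagrange's
identity `‖μ × b‖² = ‖μ‖²‖b‖² - ⟪μ, b⟫²` these are the equality cases of Cauchy–Schwarz, which for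
a unit vector `μ` are exactly `μ = ±b/‖b‖`.
-/

/-- The cross product on `EuclideanSpace ℝ (Fin 3)`. -/
noncomputable def cross (u v : EuclideanSpace ℝ (Fin 3)) : EuclideanSpace ℝ (Fin 3) :=
  (WithLp.equiv 2 (Fin 3 → ℝ)).symm
    (crossProduct ((WithLp.equiv 2 (Fin 3 → ℝ)) u) ((WithLp.equiv 2 (Fin 3 → ℝ)) v))

open Matrix
open scoped RealInnerProductSpace

section UnitVector

variable {F : Type*} [NormedAddCommGroup F] [InnerProductSpace ℝ F] {u v : F}

theorem eq_inv_norm_smul_of_real_inner_eq_norm (hu : ‖u‖ = 1) (hv : v ≠ 0)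
    (h : ⟪u, v⟫ = ‖v‖) : u = ‖v‖⁻¹ • v := by
  have : ‖v‖ • u = ‖u‖ • v := inner_eq_norm_mul_iff_real.mp (by rw [h, hu, one_mul])
  rwa [hu, one_smul, ← eq_inv_smul_iff₀ (norm_ne_zero_iff.mpr hv)] at this

theorem eq_inv_norm_smul_or_eq_neg_of_abs_real_inner_eq_norm (hu : ‖u‖ = 1) (hv : v ≠ 0)
    (h : |⟪u, v⟫| = ‖v‖) : u = ‖v‖⁻¹ • v ∨ u = -(‖v‖⁻¹ • v) := by
  rcases (abs_eq (norm_nonneg v)).mp h with h | h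
  · exact .inl (eq_inv_norm_smul_of_real_inner_eq_norm hu hv h)
  · right
    have := eq_inv_norm_smul_of_real_inner_eq_norm hu (neg_ne_zero.mpr hv)
      (by rw [inner_neg_right, h, neg_neg, norm_neg])
    rwa [norm_neg, smul_neg] at this

end UnitVector

@[simp]
theorem equiv_cross (u v : EuclideanSpace ℝ (Fin 3)) :
    WithLp.equiv 2 _ (cross u v) = WithLp.equiv 2 _ u ⨯₃ WithLp.equiv 2 _ v :=
  Equiv.apply_symm_apply _ _

theorem real_inner_eq_dotProduct (u v : EuclideanSpace ℝ (Fin 3)) :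
    ⟪u, v⟫ = WithLp.equiv 2 _ u ⬝ᵥ WithLp.equiv 2 _ v := by
  simp [PiLp.inner_apply, dotProduct, mul_comm]

theorem cross_smul_left (c : ℝ) (u v : EuclideanSpace ℝ (Fin 3)) :
    cross (c • u) v = c • cross u v := by
  simp [cross]

theorem cross_self_eq_zero (u : EuclideanSpace ℝ (Fin 3)) : cross u u = 0 := by
  simp [cross]

theorem cross_zero_right (u : EuclideanSpace ℝ (Fin 3)) : cross u 0 = 0 := by
  simp [cross]

theorem real_inner_cross_self (u v : EuclideanSpace ℝ (Fin 3)) : ⟪v, cross u v⟫ = 0 := by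
  rw [real_inner_eq_dotProduct, equiv_cross, dot_cross_self]

theorem norm_cross_sq (u v : EuclideanSpace ℝ (Fin 3)) :
    ‖cross u v‖ ^ 2 = ‖u‖ ^ 2 * ‖v‖ ^ 2 - ⟪u, v⟫ ^ 2 := by
  simp only [← real_inner_self_eq_norm_sq, real_inner_eq_dotProduct, equiv_cross, cross_dot_cross,
    dotProduct_comm (WithLp.equiv 2 _ v)]
  ring

theorem cross_eq_zero_iff_abs_real_inner_eq (u v : EuclideanSpace ℝ (Fin 3)) :
    cross u v = 0 ↔ |⟪u, v⟫| = ‖u‖ * ‖v‖ := by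
  rw [← norm_eq_zero, ← sq_eq_zero_iff, norm_cross_sq, sub_eq_zero, ← mul_pow, ← sq_abs ⟪u, v⟫,
    eq_comm, pow_left_inj₀ (abs_nonneg _) (by positivity) two_ne_zero]

theorem cross_eq_zero_iff_of_norm_eq_one {u v : EuclideanSpace ℝ (Fin 3)} (hu : ‖u‖ = 1)
    (hv : v ≠ 0) : cross u v = 0 ↔ u = ‖v‖⁻¹ • v ∨ u = -(‖v‖⁻¹ • v) := by
  constructor
  · intro h
    rw [cross_eq_zero_iff_abs_real_inner_eq, hu, one_mul] at h
    exact eq_inv_norm_smul_or_eq_neg_of_abs_real_inner_eq_norm hu hv h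
  · rintro (rfl | rfl)
    · rw [cross_smul_left, cross_self_eq_zero, smul_zero]
    · rw [← neg_smul, cross_smul_left, cross_self_eq_zero, smul_zero]

theorem landau_lifshitz_rhs_eq_zero_iff (α : ℝ) (μ b : EuclideanSpace ℝ (Fin 3)) :
    -(cross μ b) - α • cross μ (cross μ b) = 0 ↔ cross μ b = 0 := by
  constructor
  · intro h
    have := congrArg (⟪cross μ b, ·⟫) h
    simp only [inner_sub_right, inner_neg_right, inner_smul_right, real_inner_cross_self,
      inner_zero_right, mul_zero, sub_zero, neg_eq_zero] at this
    exact inner_self_eq_zero.mp this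
  · intro h
    rw [h, cross_zero_right, smul_zero, neg_zero, sub_zero]

theorem landau_lifshitz_equilibria_general
    (b : EuclideanSpace ℝ (Fin 3)) (hb : b ≠ 0) (α : ℝ)
    (μ : EuclideanSpace ℝ (Fin 3)) (hμ : ‖μ‖ = 1) :
    -(cross μ b) - α • cross μ (cross μ b) = 0 ↔
      μ = ‖b‖⁻¹ • b ∨ μ = -(‖b‖⁻¹ • b) := by
  rw [landau_lifshitz_rhs_eq_zero_iff, cross_eq_zero_iff_of_norm_eq_one hμ hb]

/-- the equilibrium points of the Landau–Lifshitz equation on the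
unit sphere are exactly `±b/‖b‖`. -/
theorem landau_lifshitz_equilibria
    (b : EuclideanSpace ℝ (Fin 3)) (hb : b ≠ 0) (α : ℝ) (hα : 0 < α)
    (μ : EuclideanSpace ℝ (Fin 3)) (hμ : ‖μ‖ = 1) :
    -(cross μ b) - α • cross μ (cross μ b) = 0 ↔
      μ = ‖b‖⁻¹ • b ∨ μ = -(‖b‖⁻¹ • b) :=
  landau_lifshitz_equilibria_general b hb α μ hμ
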